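/- Let μ and ν be compactly supported probability measures on ℝ, with the support of μ infinite. Then there exists a sequence of monic polynomials (A_n)_{n≥0} with deg A_n = n, L_ν[A_n] = A_{n−1} for all n ≥ 1, and ∫ A_n A_m dμ = 0 for all n ≠ m, if and only if there exist β′, β ∈ ℝ and γ′, γ > 0 such that ν is semicircular with mean β′ and variance γ′ (at the level of moments) and μ = Φ_{β,γ}[ν]. -/

import Mathlib

open MeasureTheory Polynomial

/-- Moments of a measure on ℝ. -/
noncomputable def mom (ρ : Measure ℝ) (k : ℕ) : ℝ := ∫ x, x ^ k ∂ρ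

/-- The operator `L_ρ` on polynomials, defined via the moment sequence `m` of `ρ`:
`L[x^n] = Σ_{k=0}^{n-1} m_{n-1-k} x^k`. -/
noncomputable def Lop (m : ℕ → ℝ) (f : Polynomial ℝ) : Polynomial ℝ :=
  f.sum fun n a => C a * ∑ k ∈ Finset.range n, C (m (n - 1 - k)) * X ^ k

/-- A measure has compact support. -/
def CompactSupp (μ : Measure ℝ) : Prop := ∃ K : Set ℝ, IsCompact K ∧ μ Kᶜ = 0

/-- The (topological) support of a measure on ℝ. -/
def msupport (μ : Measure ℝ) : Set ℝ := {x | ∀ U ∈ nhds x, μ U ≠ 0}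

/-- `JacobiShift β γ mν mμ` says (at the level of moment sequences) that `μ = Φ_{β,γ}[ν]`,
the Jacobi-parameter left shift of `ν`:
`m^μ_n = β m^μ_{n-1} + γ Σ_{i+j=n-2} m^ν_i m^μ_j` for every `n ≥ 1`. -/
def JacobiShift (β γ : ℝ) (mν mμ : ℕ → ℝ) : Prop :=
  ∀ n : ℕ, 1 ≤ n →
    mμ n = β * mμ (n - 1) + γ * ∑ i ∈ Finset.range (n - 1), mν i * mμ (n - 2 - i)

/-!
Write `P n` for the monic polynomials with Jacobi parameters `(b, g)`:
`P 0 = 1`, `P 1 = x - b 0` and `x P (n+1) = P (n+2) + b (n+1) P (n+1) + g n P n`.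

Monic orthogonal polynomials of a measure with infinite support are of this form with all
`g n > 0` (three-term recurrence); conversely such `P n` are orthogonal for a linear functional
`φ` as soon as `φ (P n) = 0` for `n ≥ 1`. Since `L_ν[x f] = x L_ν[f] + ∫ f dν`, applying
`L_ν` to the recurrence shows that `L_ν` lowers every `P n` exactly when `b` and `g` are
constant from index `1` on and `ν` is semicircular with parameters `(b 1, g 1)`. For such
`P n`, `μ = Φ_{b 0, g 0}[ν]` amounts to `∫ P n dμ = 0` for `n ≥ 1`, i.e. to orthogonality.
Both moment recursions are read as the vanishing of a linear functional on `ℝ[X]`, which can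
be checked on the basis `(P n)`.
-/

theorem Lop_add (m : ℕ → ℝ) (p q : ℝ[X]) : Lop m (p + q) = Lop m p + Lop m q :=
  sum_add_index p q _ (by simp) fun _ _ _ => by rw [map_add, add_mul]

theorem Lop_monomial (m : ℕ → ℝ) (n : ℕ) (a : ℝ) :
    Lop m (monomial n a) = C a * ∑ k ∈ Finset.range n, C (m (n - 1 - k)) * X ^ k :=
  sum_monomial_index a _ (by simp)

theorem Lop_smul (m : ℕ → ℝ) (a : ℝ) (p : ℝ[X]) : Lop m (a • p) = a • Lop m p := by
  induction p using Polynomial.induction_on' with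
  | add p q hp hq => rw [smul_add, Lop_add, hp, hq, Lop_add, smul_add]
  | monomial n b =>
    rw [smul_monomial, Lop_monomial, Lop_monomial, smul_eq_C_mul, smul_eq_mul, map_mul, mul_assoc]

noncomputable def lopLinearMap (m : ℕ → ℝ) : ℝ[X] →ₗ[ℝ] ℝ[X] where
  toFun := Lop m
  map_add' := Lop_add m
  map_smul' := Lop_smul m

theorem Lop_sub (m : ℕ → ℝ) (p q : ℝ[X]) : Lop m (p - q) = Lop m p - Lop m q :=
  map_sub (lopLinearMap m) p q

theorem Lop_C_mul (m : ℕ → ℝ) (a : ℝ) (p : ℝ[X]) : Lop m (C a * p) = C a * Lop m p := by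
  rw [← smul_eq_C_mul, ← smul_eq_C_mul, Lop_smul]

theorem Lop_one (m : ℕ → ℝ) : Lop m 1 = 0 := by
  simpa using Lop_monomial m 0 1

noncomputable def momentFunctional (m : ℕ → ℝ) : ℝ[X] →ₗ[ℝ] ℝ :=
  lsum fun n => m n • LinearMap.id

theorem momentFunctional_monomial (m : ℕ → ℝ) (n : ℕ) (a : ℝ) :
    momentFunctional m (monomial n a) = m n * a := by
  simp [momentFunctional]

theorem momentFunctional_X_pow (m : ℕ → ℝ) (n : ℕ) : momentFunctional m (X ^ n) = m n := by
  rw [← monomial_one_right_eq_X_pow, momentFunctional_monomial, mul_one]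

theorem momentFunctional_C (m : ℕ → ℝ) (a : ℝ) : momentFunctional m (C a) = m 0 * a := by
  simpa using momentFunctional_monomial m 0 a

theorem momentFunctional_one (m : ℕ → ℝ) : momentFunctional m 1 = m 0 := by
  simpa using momentFunctional_C m 1

theorem LinearMap.map_C_mul {R M : Type*} [CommRing R] [AddCommGroup M] [Module R M]
    (L : R[X] →ₗ[R] M) (a : R) (p : R[X]) : L (C a * p) = a • L p := by
  rw [← smul_eq_C_mul, map_smul]

theorem Lop_X_mul (m : ℕ → ℝ) (p : ℝ[X]) :
    Lop m (X * p) = X * Lop m p + C (momentFunctional m p) := by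
  induction p using Polynomial.induction_on' with
  | add p q hp hq => rw [mul_add, Lop_add, hp, hq, Lop_add, map_add, map_add]; ring
  | monomial n a =>
    rw [X_mul_monomial, Lop_monomial, Lop_monomial, momentFunctional_monomial,
      Finset.sum_range_succ']
    simp only [Nat.add_sub_cancel, Nat.sub_zero, pow_zero, mul_one, pow_succ, Finset.mul_sum,
      map_mul, mul_add]
    congr 1
    · exact Finset.sum_congr rfl fun k _ => by rw [show n - (k + 1) = n - 1 - k by omega]; ring
    · ring

theorem momentFunctional_Lop_X_pow (mν mρ : ℕ → ℝ) (n : ℕ) :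
    momentFunctional mρ (Lop mν (X ^ n)) = ∑ i ∈ Finset.range n, mν i * mρ (n - 1 - i) := by
  rw [← monomial_one_right_eq_X_pow, Lop_monomial, C_1, one_mul, map_sum,
    ← Finset.sum_range_reflect]
  refine Finset.sum_congr rfl fun i hi => ?_
  rw [LinearMap.map_C_mul, momentFunctional_X_pow, smul_eq_mul,
    show n - 1 - (n - 1 - i) = i by have := Finset.mem_range.mp hi; omega]

noncomputable def shiftDefect (a c : ℝ) (mν mρ : ℕ → ℝ) : ℝ[X] →ₗ[ℝ] ℝ :=
  momentFunctional mρ ∘ₗ LinearMap.mulLeft ℝ X - a • momentFunctional mρ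
    - c • (momentFunctional mρ ∘ₗ lopLinearMap mν)

section ShiftDefect

variable (a c : ℝ) (mν mρ : ℕ → ℝ)

theorem shiftDefect_apply (p : ℝ[X]) :
    shiftDefect a c mν mρ p = momentFunctional mρ (X * p) - a * momentFunctional mρ p
      - c * momentFunctional mρ (Lop mν p) :=
  rfl

theorem shiftDefect_X_pow (n : ℕ) :
    shiftDefect a c mν mρ (X ^ n) =
      mρ (n + 1) - a * mρ n - c * ∑ i ∈ Finset.range n, mν i * mρ (n - 1 - i) := by
  rw [shiftDefect_apply, ← pow_succ', momentFunctional_X_pow, momentFunctional_X_pow,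
    momentFunctional_Lop_X_pow]

theorem jacobiShift_iff_shiftDefect_eq_zero :
    JacobiShift a c mν mρ ↔ shiftDefect a c mν mρ = 0 := by
  constructor
  · intro h
    refine lhom_ext' fun n => LinearMap.ext_ring ?_
    have hn := h (n + 1) n.succ_pos
    simp only [Nat.add_sub_cancel, show ∀ i, n + 1 - 2 - i = n - 1 - i by omega] at hn
    simp only [LinearMap.comp_apply, monomial_one_right_eq_X_pow, shiftDefect_X_pow,
      LinearMap.zero_apply, hn]
    ring
  · rintro h (_ | n) hn
    · omega
    have hn := shiftDefect_X_pow a c mν mρ n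
    simp only [h, LinearMap.zero_apply] at hn
    simp only [Nat.add_sub_cancel, show ∀ i, n + 1 - 2 - i = n - 1 - i by omega]
    linarith

end ShiftDefect

theorem mom_zero (ρ : Measure ℝ) [IsProbabilityMeasure ρ] : mom ρ 0 = 1 := by
  simp [mom]

section Measure

variable {ρ : Measure ℝ}

theorem CompactSupp.integrable_of_continuous [IsFiniteMeasureOnCompacts ρ] (hρ : CompactSupp ρ)
    {f : ℝ → ℝ} (hf : Continuous f) : Integrable f ρ := by
  obtain ⟨K, hK, hKc⟩ := hρ
  have hf_on := hf.continuousOn.integrableOn_compact (μ := ρ) hK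
  rwa [IntegrableOn, Measure.restrict_eq_self_of_ae_mem (ae_iff.mpr hKc)] at hf_on

theorem integral_eval_eq_momentFunctional [IsFiniteMeasureOnCompacts ρ] (hρ : CompactSupp ρ)
    (p : ℝ[X]) : ∫ x, p.eval x ∂ρ = momentFunctional (mom ρ) p := by
  induction p using Polynomial.induction_on' with
  | add p q hp hq =>
    simp only [eval_add, map_add]
    rw [integral_add (hρ.integrable_of_continuous p.continuous)
      (hρ.integrable_of_continuous q.continuous), hp, hq]
  | monomial n a =>
    simp only [eval_monomial, momentFunctional_monomial, integral_const_mul, mom]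
    ring

theorem momentFunctional_mul_self_pos [IsFiniteMeasureOnCompacts ρ] (hρ : CompactSupp ρ)
    (hinf : (msupport ρ).Infinite) {p : ℝ[X]} (hp : p ≠ 0) :
    0 < momentFunctional (mom ρ) (p * p) := by
  obtain ⟨x₀, hx₀, hroot⟩ := (hinf.sdiff (p.finite_setOfPred_isRoot hp)).nonempty
  have hcont : Continuous fun x => (p * p).eval x := (p * p).continuous
  rw [← integral_eval_eq_momentFunctional hρ, integral_pos_iff_support_of_nonneg
    (fun x => by simp only [Pi.zero_apply, eval_mul]; exact mul_self_nonneg (p.eval x))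
    (hρ.integrable_of_continuous hcont)]
  refine pos_iff_ne_zero.mpr (hx₀ _ ((isOpen_compl_singleton.preimage hcont).mem_nhds ?_))
  simpa only [Set.mem_preimage, eval_mul, Set.mem_compl_singleton_iff] using
    mul_self_ne_zero.mpr hroot

end Measure

theorem exists_eq_C_mul_add_of_degree_le {R : Type*} [CommRing R] [Nontrivial R] {p a : R[X]}
    (ha : a.Monic) (hp : p.degree ≤ a.degree) :
    ∃ c r, p = C c * a + r ∧ r.degree < a.degree := by
  refine ⟨(p /ₘ a).coeff 0, p %ₘ a, ?_, degree_modByMonic_lt p ha⟩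
  have hquot : (p /ₘ a).natDegree = 0 := by
    rw [natDegree_divByMonic p ha, Nat.sub_eq_zero_of_le (natDegree_le_natDegree hp)]
  conv_lhs => rw [← modByMonic_add_div p a, eq_C_of_natDegree_eq_zero hquot]
  ring

section MonicFamily

variable {R : Type*} [CommRing R] [Nontrivial R] {A : ℕ → R[X]}
  (hmon : ∀ n, (A n).Monic) (hdeg : ∀ n, (A n).natDegree = n)
include hmon hdeg

theorem degree_eq_of_monic (n : ℕ) : (A n).degree = n :=
  (degree_eq_iff_natDegree_eq (hmon n).ne_zero).mpr (hdeg n)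

def monicSequence : Sequence R :=
  ⟨A, degree_eq_of_monic hmon hdeg⟩

theorem span_range_eq_top_of_monic : Submodule.span R (Set.range A) = ⊤ :=
  (monicSequence hmon hdeg).span fun n => by simp [monicSequence, (hmon n).leadingCoeff]

theorem apply_mul_eq_zero_of_degree_lt {M : Type*} [AddCommGroup M] [Module R M]
    (L : R[X] →ₗ[R] M) {a : R[X]} {n : ℕ} (h : ∀ k < n, L (A k * a) = 0) {q : R[X]}
    (hq : q.degree < n) : L (q * a) = 0 := by
  have hspan :
      Submodule.span R (A '' Set.Iio n) ≤ LinearMap.ker (L ∘ₗ LinearMap.mulRight R a) :=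
    Submodule.span_le.mpr <| by rintro _ ⟨k, hk, rfl⟩; exact h k hk
  refine hspan ?_
  rw [show A = monicSequence hmon hdeg from rfl, Sequence.span_degreeLT _ fun n _ => by
    simp [monicSequence, (hmon n).leadingCoeff]]
  exact mem_degreeLT.mpr hq

theorem pairwise_apply_mul_eq_zero_iff {M : Type*} [AddCommGroup M] [Module R M]
    (L : R[X] →ₗ[R] M) : (Pairwise fun m n => L (A m * A n) = 0) ↔
      ∀ (n : ℕ) (q : R[X]), q.degree < n → L (q * A n) = 0 := by
  constructor
  · exact fun h n q => apply_mul_eq_zero_of_degree_lt hmon hdeg L fun k hk => h hk.ne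
  · intro h m n hmn
    rcases hmn.lt_or_gt with hlt | hlt
    · exact h n (A m) (by rw [degree_eq_of_monic hmon hdeg]; exact_mod_cast hlt)
    · rw [mul_comm]
      exact h m (A n) (by rw [degree_eq_of_monic hmon hdeg]; exact_mod_cast hlt)

theorem degree_X_mul_sub_lt (n : ℕ) : (X * A n - A (n + 1)).degree < ↑(n + 1) := by
  have hX := monic_X.mul (hmon n)
  have hdegX : (X * A n).degree = ↑(n + 1) := by
    rw [X_mul, degree_mul_X, degree_eq_of_monic hmon hdeg]
    rfl
  rw [← hdegX]
  exact degree_sub_lt_left (by rw [hdegX, degree_eq_of_monic hmon hdeg]) hX.ne_zero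
    (by rw [hX.leadingCoeff, (hmon _).leadingCoeff])

end MonicFamily

section JacobiParamPoly

variable {R : Type*} [CommRing R] (b g : ℕ → R)

noncomputable def jacobiParamPoly : ℕ → R[X]
  | 0 => 1
  | 1 => X - C (b 0)
  | n + 2 => (X - C (b (n + 1))) * jacobiParamPoly (n + 1) - C (g n) * jacobiParamPoly n

local notation "P" => jacobiParamPoly b g

theorem X_mul_jacobiParamPoly_zero : X * P 0 = P 1 + C (b 0) := by
  simp [jacobiParamPoly]

theorem X_mul_jacobiParamPoly_succ (n : ℕ) :
    X * P (n + 1) = P (n + 2) + C (b (n + 1)) * P (n + 1) + C (g n) * P n := by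
  rw [jacobiParamPoly]
  ring

theorem monic_jacobiParamPoly_and_natDegree [Nontrivial R] :
    ∀ n, (P n).Monic ∧ (P n).natDegree = n
  | 0 => ⟨monic_one, natDegree_one⟩
  | 1 => ⟨monic_X_sub_C _, natDegree_X_sub_C _⟩
  | n + 2 => by
    obtain ⟨hmon₁, hdeg₁⟩ := monic_jacobiParamPoly_and_natDegree (n + 1)
    obtain ⟨-, hdeg₀⟩ := monic_jacobiParamPoly_and_natDegree n
    have hlead := (monic_X_sub_C (b (n + 1))).mul hmon₁
    have hlead_deg : ((X - C (b (n + 1))) * P (n + 1)).natDegree = n + 2 := by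
      rw [(monic_X_sub_C _).natDegree_mul hmon₁, natDegree_X_sub_C, hdeg₁, add_comm]
    have hlt : (C (g n) * P n).natDegree < n + 2 := (natDegree_C_mul_le _ _).trans_lt (by omega)
    rw [← hlead_deg] at hlt
    rw [jacobiParamPoly]
    exact ⟨hlead.sub_of_left (degree_lt_degree hlt),
      (natDegree_sub_eq_left_of_natDegree_lt hlt).trans hlead_deg⟩

theorem monic_jacobiParamPoly [Nontrivial R] (n : ℕ) : (P n).Monic :=
  (monic_jacobiParamPoly_and_natDegree b g n).1

theorem natDegree_jacobiParamPoly [Nontrivial R] (n : ℕ) : (P n).natDegree = n :=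
  (monic_jacobiParamPoly_and_natDegree b g n).2

theorem coeff_jacobiParamPoly_self [Nontrivial R] (n : ℕ) : (P n).coeff n = 1 := by
  simpa only [natDegree_jacobiParamPoly] using (monic_jacobiParamPoly b g n).coeff_natDegree

theorem coeff_jacobiParamPoly_of_lt [Nontrivial R] {n k : ℕ} (h : n < k) : (P n).coeff k = 0 :=
  coeff_eq_zero_of_natDegree_lt (by rwa [natDegree_jacobiParamPoly])

theorem apply_X_pow_mul_jacobiParamPoly {M : Type*} [AddCommGroup M] [Module R M]
    (L : R[X] →ₗ[R] M) (h : ∀ n, L (P (n + 1)) = 0) :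
    ∀ {k n : ℕ}, k < n → L (X ^ k * P n) = 0
  | 0, n + 1, _ => by rw [pow_zero, one_mul, h]
  | k + 1, n + 1, hk => by
    have ih := fun {m : ℕ} (hm : k < m) => apply_X_pow_mul_jacobiParamPoly L h hm
    rw [pow_succ, mul_assoc, X_mul_jacobiParamPoly_succ, mul_add, mul_add, map_add, map_add,
      mul_left_comm, LinearMap.map_C_mul, mul_left_comm, LinearMap.map_C_mul,
      ih (by omega), ih (by omega), ih (by omega), smul_zero, smul_zero, add_zero, add_zero]

theorem pairwise_apply_jacobiParamPoly_mul_eq_zero [Nontrivial R] {M : Type*} [AddCommGroup M]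
    [Module R M] (L : R[X] →ₗ[R] M) (h : ∀ n, L (P (n + 1)) = 0) :
    Pairwise fun m n => L (P m * P n) = 0 :=
  (pairwise_apply_mul_eq_zero_iff (monic_jacobiParamPoly b g) (natDegree_jacobiParamPoly b g)
    L).mpr fun _ _ hq => apply_mul_eq_zero_of_degree_lt monic_X_pow natDegree_X_pow
      L (fun _ hk => apply_X_pow_mul_jacobiParamPoly b g L h hk) hq

end JacobiParamPoly

theorem eq_jacobiParamPoly_of_recurrence {R : Type*} [CommRing R] {b g : ℕ → R}
    {A : ℕ → R[X]} (h₀ : A 0 = 1) (h₁ : A 1 = X - C (b 0))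
    (hrec : ∀ n, A (n + 2) = (X - C (b (n + 1))) * A (n + 1) - C (g n) * A n) :
    A = jacobiParamPoly b g := by
  funext n
  induction n using Nat.strong_induction_on with
  | _ n ih =>
    match n with
    | 0 => exact h₀
    | 1 => exact h₁
    | n + 2 => rw [hrec, ih (n + 1) (by omega), ih n (by omega), jacobiParamPoly]

section ThreeTermRecurrence

variable {K : Type*} [Field K] [LinearOrder K] {A : ℕ → K[X]}
  (hmon : ∀ n, (A n).Monic) (hdeg : ∀ n, (A n).natDegree = n) {L : K[X] →ₗ[K] K}
  (hpos : ∀ p ≠ 0, 0 < L (p * p)) (horth : Pairwise fun m n => L (A m * A n) = 0)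
include hmon hdeg hpos horth

theorem exists_three_term_recurrence (n : ℕ) :
    ∃ b g : K, X * A (n + 1) = A (n + 2) + C b * A (n + 1) + C g * A n := by
  have hlow := (pairwise_apply_mul_eq_zero_iff hmon hdeg L).mp horth
  have hdeg' := degree_eq_of_monic hmon hdeg
  obtain ⟨b, r, hr, hr_deg⟩ := exists_eq_C_mul_add_of_degree_le (hmon (n + 1))
    (p := X * A (n + 1) - A (n + 2)) <| by
      rw [hdeg']
      exact Order.le_of_lt_succ (degree_X_mul_sub_lt hmon hdeg (n + 1))
  obtain ⟨g, s, hs, hs_deg⟩ := exists_eq_C_mul_add_of_degree_le (hmon n) (p := r) <| by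
    rw [hdeg'] at hr_deg ⊢
    exact Order.le_of_lt_succ hr_deg
  rw [hdeg'] at hs_deg
  refine ⟨b, g, ?_⟩
  -- `s` has degree `< n` and is orthogonal to everything of degree `< n`, itself included
  suffices hs_zero : s = 0 by linear_combination hr + hs + hs_zero
  by_contra hne
  have hsX : (X * s).degree < ↑(n + 1) := by
    rw [degree_eq_natDegree hne] at hs_deg
    rw [X_mul, degree_mul_X, degree_eq_natDegree hne]
    exact_mod_cast Nat.succ_lt_succ (by exact_mod_cast hs_deg)
  have hlow_s : ∀ k, n ≤ k → L (s * A k) = 0 := fun k hk =>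
    hlow k s (hs_deg.trans_le (by exact_mod_cast hk))
  have hss : s * s = X * s * A (n + 1) - s * A (n + 2) - C b * (s * A (n + 1))
      - C g * (s * A n) := by linear_combination (-s) * (hr + hs)
  have hpos_s := hpos s hne
  rw [hss, map_sub, map_sub, map_sub, LinearMap.map_C_mul, LinearMap.map_C_mul, hlow _ _ hsX,
    hlow_s n le_rfl, hlow_s (n + 1) (by omega), hlow_s (n + 2) (by omega)] at hpos_s
  simp at hpos_s

theorem pos_of_three_term_recurrence [IsStrictOrderedRing K] {n : ℕ} {b g : K}
    (hrec : X * A (n + 1) = A (n + 2) + C b * A (n + 1) + C g * A n) : 0 < g := by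
  have hlow := (pairwise_apply_mul_eq_zero_iff hmon hdeg L).mp horth
  have hnorm : g * L (A n * A n) = L (A (n + 1) * A (n + 1)) := by
    have h : A (n + 2) * A n + C b * (A (n + 1) * A n) + C g * (A n * A n) =
        (X * A n - A (n + 1)) * A (n + 1) + A (n + 1) * A (n + 1) := by
      linear_combination -(A n * hrec)
    have := congrArg L h
    rwa [map_add, map_add, map_add, LinearMap.map_C_mul, LinearMap.map_C_mul, horth (by omega),
      horth (by omega), hlow _ _ (degree_X_mul_sub_lt hmon hdeg n), smul_zero, zero_add, zero_add,
      zero_add, smul_eq_mul] at this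
  exact (mul_pos_iff_of_pos_right (hpos _ (hmon n).ne_zero)).mp
    (hnorm ▸ hpos _ (hmon (n + 1)).ne_zero)

theorem exists_eq_jacobiParamPoly_of_orthogonal [IsStrictOrderedRing K] :
    ∃ b g : ℕ → K, (∀ n, 0 < g n) ∧ A = jacobiParamPoly b g := by
  choose b g hrec using exists_three_term_recurrence hmon hdeg hpos horth
  refine ⟨fun | 0 => -(A 1).coeff 0 | n + 1 => b n, g,
    fun n => pos_of_three_term_recurrence hmon hdeg hpos horth (hrec n),
    eq_jacobiParamPoly_of_recurrence ((hmon 0).natDegree_eq_zero.mp (hdeg 0)) ?_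
      fun n => by linear_combination -hrec n⟩
  rw [map_neg, sub_neg_eq_add]
  exact (hmon 1).eq_X_add_C (hdeg 1)

end ThreeTermRecurrence

section LopJacobiParamPoly

variable (b g m : ℕ → ℝ)

local notation "P" => jacobiParamPoly b g

theorem Lop_jacobiParamPoly_add_two (n : ℕ) :
    Lop m (P (n + 2)) = (X - C (b (n + 1))) * Lop m (P (n + 1))
      + C (momentFunctional m (P (n + 1))) - C (g n) * Lop m (P n) := by
  rw [jacobiParamPoly, Lop_sub, sub_mul, Lop_sub, Lop_X_mul, Lop_C_mul, Lop_C_mul]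
  ring

theorem Lop_jacobiParamPoly_two_sub (h₀ : Lop m (P 1) = P 0) :
    Lop m (P 2) - P 1 = C (b 0 - b 1 + momentFunctional m (P 1)) := by
  rw [Lop_jacobiParamPoly_add_two, h₀, show P 0 = 1 from rfl, Lop_one,
    show P 1 = X - C (b 0) from rfl]
  simp only [map_add, map_sub]
  ring

theorem Lop_jacobiParamPoly_add_three_sub {n : ℕ} (h₁ : Lop m (P (n + 2)) = P (n + 1))
    (h₀ : Lop m (P (n + 1)) = P n) :
    Lop m (P (n + 3)) - P (n + 2) = C (b (n + 1) - b (n + 2)) * P (n + 1)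
      + C (g n - g (n + 1)) * P n + C (momentFunctional m (P (n + 2))) := by
  rw [Lop_jacobiParamPoly_add_two, h₁, h₀, map_sub, map_sub]
  linear_combination X_mul_jacobiParamPoly_succ b g n

variable (a c : ℝ) (mν mρ : ℕ → ℝ)

theorem shiftDefect_jacobiParamPoly_zero :
    shiftDefect a c mν mρ (P 0) =
      momentFunctional mρ (P 1) - (a - b 0) * momentFunctional mρ (P 0) := by
  rw [shiftDefect_apply, X_mul_jacobiParamPoly_zero, show P 0 = 1 from rfl, Lop_one, map_zero,
    map_add, ← mul_one (C (b 0)), LinearMap.map_C_mul, smul_eq_mul]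
  ring

theorem shiftDefect_jacobiParamPoly_succ {n : ℕ} (hL : Lop mν (P (n + 1)) = P n) :
    shiftDefect a c mν mρ (P (n + 1)) = momentFunctional mρ (P (n + 2))
      - (a - b (n + 1)) * momentFunctional mρ (P (n + 1))
      - (c - g n) * momentFunctional mρ (P n) := by
  rw [shiftDefect_apply, X_mul_jacobiParamPoly_succ, hL, map_add, map_add, LinearMap.map_C_mul,
    LinearMap.map_C_mul, smul_eq_mul, smul_eq_mul]
  ring

theorem shiftDefect_eq_zero_of_jacobiParamPoly (h : ∀ n, shiftDefect a c mν mρ (P n) = 0) :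
    shiftDefect a c mν mρ = 0 :=
  LinearMap.ext_on_range
    (span_range_eq_top_of_monic (monic_jacobiParamPoly b g) (natDegree_jacobiParamPoly b g)) h

end LopJacobiParamPoly

section Lowering

variable {b g m : ℕ → ℝ}

local notation "P" => jacobiParamPoly b g

theorem shiftDefect_eq_zero_iff_of_Lop (mρ : ℕ → ℝ) (hL : ∀ n, Lop m (P (n + 1)) = P n) :
    shiftDefect (b 0) (g 0) m mρ = 0 ↔ ∀ n, momentFunctional mρ (P (n + 1)) = 0 := by
  have hD₀ := shiftDefect_jacobiParamPoly_zero b g (b 0) (g 0) m mρ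
  have hD := fun n => shiftDefect_jacobiParamPoly_succ b g (b 0) (g 0) m mρ (hL n)
  rw [sub_self, zero_mul, sub_zero] at hD₀
  constructor
  · intro h
    have key : ∀ n, momentFunctional mρ (P (n + 1)) = 0 ∧
        (g 0 - g n) * momentFunctional mρ (P n) = 0 := by
      intro n
      induction n with
      | zero => exact ⟨by rw [← hD₀, h, LinearMap.zero_apply], by rw [sub_self, zero_mul]⟩
      | succ n ih =>
        have hn := hD n
        rw [h, LinearMap.zero_apply, ih.1, ih.2] at hn
        exact ⟨by linarith, by rw [ih.1, mul_zero]⟩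
    exact fun n => (key n).1
  · intro h
    refine shiftDefect_eq_zero_of_jacobiParamPoly b g _ _ m mρ fun n => ?_
    rcases n with _ | _ | n
    · rw [hD₀, h]
    · rw [hD, h, h, sub_self]; ring
    · rw [hD, h, h, h]; ring

theorem jacobiParamPoly_linear_relation_of_Lop (hL : ∀ n, Lop m (P (n + 1)) = P n) (n : ℕ) :
    C (b (n + 1) - b (n + 2)) * P (n + 1) + C (g n - g (n + 1)) * P n
      + C (momentFunctional m (P (n + 2))) = 0 := by
  have h := Lop_jacobiParamPoly_add_three_sub b g m (hL (n + 1)) (hL n)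
  rwa [hL (n + 2), sub_self, eq_comm] at h

theorem jacobiParams_succ_eq_of_Lop (hL : ∀ n, Lop m (P (n + 1)) = P n) :
    (∀ n, b (n + 1) = b 1) ∧ (∀ n, g (n + 1) = g 1) := by
  have hb : ∀ n, b (n + 2) = b (n + 1) := fun n => by
    have h := congrArg (coeff · (n + 1)) (jacobiParamPoly_linear_relation_of_Lop hL n)
    simp only [coeff_add, coeff_C_mul, coeff_jacobiParamPoly_self,
      coeff_jacobiParamPoly_of_lt b g n.lt_succ_self, coeff_C_succ, coeff_zero] at h
    linarith
  have hg : ∀ n, g (n + 2) = g (n + 1) := fun n => by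
    have h := jacobiParamPoly_linear_relation_of_Lop hL (n + 1)
    rw [hb (n + 1), sub_self, C_0, zero_mul, zero_add] at h
    have h' := congrArg (coeff · (n + 1)) h
    simp only [coeff_add, coeff_C_mul, coeff_jacobiParamPoly_self, coeff_C_succ, coeff_zero] at h'
    linarith
  refine ⟨fun n => ?_, fun n => ?_⟩ <;> induction n with
  | zero => rfl
  | succ n ih => first | exact (hb n).trans ih | exact (hg n).trans ih

theorem shiftDefect_self_eq_zero_of_Lop (hm : m 0 = 1) (hL : ∀ n, Lop m (P (n + 1)) = P n) :
    shiftDefect (b 1) (g 1) m m = 0 := by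
  obtain ⟨hb, hg⟩ := jacobiParams_succ_eq_of_Lop hL
  have hP₀ : momentFunctional m (P 0) = 1 := (momentFunctional_one m).trans hm
  refine shiftDefect_eq_zero_of_jacobiParamPoly b g _ _ m m fun n => ?_
  rcases n with _ | n
  · have h := Lop_jacobiParamPoly_two_sub b g m (hL 0)
    rw [hL 1, sub_self, eq_comm, C_eq_zero] at h
    rw [shiftDefect_jacobiParamPoly_zero, hP₀]
    linarith
  · have h := congrArg (momentFunctional m) (jacobiParamPoly_linear_relation_of_Lop hL n)
    have hb₂ : b (n + 2) = b 1 := hb (n + 1)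
    rw [map_add, map_add, LinearMap.map_C_mul, LinearMap.map_C_mul, momentFunctional_C, hm,
      map_zero, hb n, hb₂, hg n, smul_eq_mul, smul_eq_mul] at h
    rw [shiftDefect_jacobiParamPoly_succ b g _ _ m m (hL n), hb n]
    linear_combination h

theorem Lop_jacobiParamPoly_of_shiftDefect_self (hm : m 0 = 1) (hb : ∀ n, b (n + 1) = b 1)
    (hg : ∀ n, g (n + 1) = g 1) (hD : shiftDefect (b 1) (g 1) m m = 0) :
    ∀ n, Lop m (P (n + 1)) = P n := by
  have hP₀ : momentFunctional m (P 0) = 1 := (momentFunctional_one m).trans hm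
  have h₀ : Lop m (P 1) = P 0 := by
    rw [show P 1 = X * 1 - C (b 0) * 1 by rw [mul_one, mul_one]; rfl, Lop_sub, Lop_X_mul,
      Lop_C_mul, Lop_one, momentFunctional_one, hm]
    simp [jacobiParamPoly]
  have h₁ : Lop m (P 2) = P 1 := by
    have hD₀ := shiftDefect_jacobiParamPoly_zero b g (b 1) (g 1) m m
    rw [hD, LinearMap.zero_apply, hP₀] at hD₀
    rw [← sub_eq_zero, Lop_jacobiParamPoly_two_sub b g m h₀, C_eq_zero]
    linarith
  intro n
  induction n using Nat.strong_induction_on with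
  | _ n ih =>
    match n with
    | 0 => exact h₀
    | 1 => exact h₁
    | n + 2 =>
      have hD₁ := shiftDefect_jacobiParamPoly_succ b g (b 1) (g 1) m m (ih n (by omega))
      have hb₂ : b (n + 2) = b 1 := hb (n + 1)
      rw [hD, LinearMap.zero_apply, hb n, sub_self, zero_mul, sub_zero] at hD₁
      rw [← sub_eq_zero, Lop_jacobiParamPoly_add_three_sub b g m (ih (n + 1) (by omega))
        (ih n (by omega)), hb n, hb₂, hg n, sub_self, C_0, zero_mul, zero_add,
        show momentFunctional m (P (n + 2)) = (g 1 - g n) * momentFunctional m (P n) by linarith]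
      rcases n with _ | n
      · rw [hP₀, show P 0 = 1 from rfl, mul_one, mul_one, ← C_add]
        simp
      · rw [hg n, sub_self, zero_mul, C_0, zero_mul, zero_add]

theorem Lop_jacobiParamPoly_succ_iff (hm : m 0 = 1) :
    (∀ n, Lop m (P (n + 1)) = P n) ↔
      (∀ n, b (n + 1) = b 1) ∧ (∀ n, g (n + 1) = g 1) ∧ shiftDefect (b 1) (g 1) m m = 0 :=
  ⟨fun hL => ⟨(jacobiParams_succ_eq_of_Lop hL).1, (jacobiParams_succ_eq_of_Lop hL).2,
    shiftDefect_self_eq_zero_of_Lop hm hL⟩,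
    fun ⟨hb, hg, hD⟩ => Lop_jacobiParamPoly_of_shiftDefect_self hm hb hg hD⟩

end Lowering

theorem stmt10_general (μ ν : Measure ℝ) [IsProbabilityMeasure μ] [IsProbabilityMeasure ν]
    (hcsμ : CompactSupp μ) (hinf : (msupport μ).Infinite) :
    (∃ A : ℕ → Polynomial ℝ,
      (∀ n, (A n).Monic) ∧ (∀ n, (A n).natDegree = n) ∧
      (∀ n : ℕ, 1 ≤ n → Lop (mom ν) (A n) = A (n - 1)) ∧
      (∀ n m : ℕ, n ≠ m → ∫ x, (A n).eval x * (A m).eval x ∂μ = 0))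
    ↔ ∃ (β' β : ℝ) (γ' γ : ℝ), 0 < γ' ∧ 0 < γ ∧
        JacobiShift β' γ' (mom ν) (mom ν) ∧ JacobiShift β γ (mom ν) (mom μ) := by
  have hμ (p q : ℝ[X]) :
      ∫ x, p.eval x * q.eval x ∂μ = momentFunctional (mom μ) (p * q) := by
    simp only [← eval_mul]
    exact integral_eval_eq_momentFunctional hcsμ (p * q)
  simp only [hμ, jacobiShift_iff_shiftDefect_eq_zero]
  constructor
  · rintro ⟨A, hmon, hdeg, hL, horth⟩
    obtain ⟨b, g, hg, rfl⟩ := exists_eq_jacobiParamPoly_of_orthogonal hmon hdeg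
      (fun _ hp => momentFunctional_mul_self_pos hcsμ hinf hp) (fun m n h => horth m n h)
    have hL' (n : ℕ) : Lop (mom ν) (jacobiParamPoly b g (n + 1)) = jacobiParamPoly b g n :=
      hL (n + 1) n.succ_pos
    refine ⟨b 1, b 0, g 1, g 0, hg 1, hg 0,
      ((Lop_jacobiParamPoly_succ_iff (mom_zero ν)).mp hL').2.2,
      (shiftDefect_eq_zero_iff_of_Lop _ hL').mpr fun n => ?_⟩
    simpa only [show jacobiParamPoly b g 0 = 1 from rfl, mul_one] using
      horth (n + 1) 0 n.succ_ne_zero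
  · rintro ⟨β', β, γ', γ, -, -, hν, hνμ⟩
    let b : ℕ → ℝ := fun | 0 => β | _ + 1 => β'
    let g : ℕ → ℝ := fun | 0 => γ | _ + 1 => γ'
    have hL := (Lop_jacobiParamPoly_succ_iff (b := b) (g := g) (mom_zero ν)).mpr
      ⟨fun _ => rfl, fun _ => rfl, hν⟩
    refine ⟨jacobiParamPoly b g, monic_jacobiParamPoly b g, natDegree_jacobiParamPoly b g, ?_,
      fun m n h => pairwise_apply_jacobiParamPoly_mul_eq_zero b g _
        ((shiftDefect_eq_zero_iff_of_Lop _ hL).mp hνμ) h⟩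
    rintro (_ | n) hn
    · omega
    · exact hL n

theorem stmt10 (μ ν : Measure ℝ) [IsProbabilityMeasure μ] [IsProbabilityMeasure ν]
    (hcsμ : CompactSupp μ) (hcsν : CompactSupp ν) (hinf : (msupport μ).Infinite) :
    (∃ A : ℕ → Polynomial ℝ,
      (∀ n, (A n).Monic) ∧ (∀ n, (A n).natDegree = n) ∧
      (∀ n : ℕ, 1 ≤ n → Lop (mom ν) (A n) = A (n - 1)) ∧
      (∀ n m : ℕ, n ≠ m → ∫ x, (A n).eval x * (A m).eval x ∂μ = 0))
    ↔ ∃ (β' β : ℝ) (γ' γ : ℝ), 0 < γ' ∧ 0 < γ ∧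
        JacobiShift β' γ' (mom ν) (mom ν) ∧ JacobiShift β γ (mom ν) (mom μ) :=
  stmt10_general μ ν hcsμ hinf
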